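/- arXiv:2506.15632 — 6 statements merged into one kernel-verified Lean document; each statement's English description precedes it below -/
import Mathlib

section
/- Let A : ℝⁿ → ℝⁿ be a linear operator and h : ℝⁿ → ℝ be strongly quasiconvex with modulus γ ≥ 0. Then f := h ∘ A is strongly quasiconvex with modulus γ·σ_min(A)², where σ_min(A) ≥ 0 is the minimum singular value of A (equivalently, σ_min(A) is the largest constant σ ≥ 0 such that ‖Ax‖ ≥ σ‖x‖ for all x). -/
theorem strongly_quasiconvex_comp_linear
    {n : ℕ} (A : EuclideanSpace ℝ (Fin n) →ₗ[ℝ] EuclideanSpace ℝ (Fin n))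
    (h : EuclideanSpace ℝ (Fin n) → ℝ) (γ σ : ℝ) (hγ : 0 ≤ γ) (hσ : 0 ≤ σ)
    (hσmin : ∀ x : EuclideanSpace ℝ (Fin n), σ * ‖x‖ ≤ ‖A x‖)
    (hsq : ∀ x y : EuclideanSpace ℝ (Fin n), ∀ lam : ℝ, lam ∈ Set.Icc (0:ℝ) 1 →
      h (lam • y + (1 - lam) • x) ≤
        max (h y) (h x) - lam * (1 - lam) * (γ / 2) * ‖x - y‖ ^ 2) :
    ∀ x y : EuclideanSpace ℝ (Fin n), ∀ lam : ℝ, lam ∈ Set.Icc (0:ℝ) 1 →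
      (h ∘ A) (lam • y + (1 - lam) • x) ≤
        max ((h ∘ A) y) ((h ∘ A) x) - lam * (1 - lam) * (γ * σ ^ 2 / 2) * ‖x - y‖ ^ 2 := by
  intro x y lam hlam
  obtain ⟨h0, h1⟩ := hlam
  have key := hsq (A x) (A y) lam ⟨h0, h1⟩
  have hAeq : A (lam • y + (1 - lam) • x) = lam • A y + (1 - lam) • A x := by
    simp [map_add, map_smul]
  have hnorm : σ * ‖x - y‖ ≤ ‖A x - A y‖ := by
    have := hσmin (x - y)
    rwa [map_sub] at this
  have hsq2 : σ ^ 2 * ‖x - y‖ ^ 2 ≤ ‖A x - A y‖ ^ 2 := by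
    have h1' : (σ * ‖x - y‖) ^ 2 ≤ ‖A x - A y‖ ^ 2 := by
      apply sq_le_sq' _ hnorm
      have : 0 ≤ σ * ‖x - y‖ := mul_nonneg hσ (norm_nonneg _)
      linarith [norm_nonneg (A x - A y)]
    nlinarith
  have hmul : lam * (1 - lam) * (γ * σ ^ 2 / 2) * ‖x - y‖ ^ 2 ≤
      lam * (1 - lam) * (γ / 2) * ‖A x - A y‖ ^ 2 := by
    have hl : 0 ≤ lam * (1 - lam) := mul_nonneg h0 (by linarith)
    have := mul_le_mul_of_nonneg_left hsq2
      (mul_nonneg hl (by linarith : (0:ℝ) ≤ γ / 2))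
    nlinarith [this]
  simp only [Function.comp_apply, hAeq]
  linarith
end

section
/- Let h : ℝⁿ → ℝ be lower semicontinuous and strongly quasiconvex with modulus γ > 0 on a nonempty closed convex set K ⊆ ℝⁿ, and suppose x̄ ∈ K is a minimizer of h on K. Then h(x̄) + (γ/4)‖x - x̄‖² ≤ h(x) for all x ∈ K (quadratic growth). -/
theorem quadratic_growth_of_strongly_quasiconvex
    {n : ℕ} (K : Set (EuclideanSpace ℝ (Fin n))) (hKne : K.Nonempty)
    (hKc : IsClosed K) (hKconv : Convex ℝ K)
    (h : EuclideanSpace ℝ (Fin n) → ℝ) (hlsc : LowerSemicontinuous h)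
    (γ : ℝ) (hγ : 0 < γ)
    (hsq : ∀ x ∈ K, ∀ y ∈ K, ∀ lam : ℝ, lam ∈ Set.Icc (0:ℝ) 1 →
      h (lam • y + (1 - lam) • x) ≤
        max (h y) (h x) - lam * (1 - lam) * (γ / 2) * ‖x - y‖ ^ 2)
    (xbar : EuclideanSpace ℝ (Fin n)) (hxbar : xbar ∈ K)
    (hmin : ∀ x ∈ K, h xbar ≤ h x) :
    ∀ x ∈ K, h xbar + (γ / 4) * ‖x - xbar‖ ^ 2 ≤ h x := by
  have key : ∀ k : ℕ, ∀ x ∈ K,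
      h xbar + (γ / 4) * ((k : ℝ) / (k + 1)) * ‖x - xbar‖ ^ 2 ≤ h x := by
    intro k
    induction k with
    | zero =>
      intro x hx
      simpa using hmin x hx
    | succ k ih =>
      intro x hx
      have hk2 : (0:ℝ) < (k : ℝ) + 2 := by positivity
      set lam : ℝ := 1 / ((k : ℝ) + 2) with hlamdef
      have hlam0 : 0 ≤ lam := by positivity
      have hlam1 : lam ≤ 1 := by
        rw [hlamdef, div_le_one hk2]; linarith
      have hz : lam • xbar + (1 - lam) • x ∈ K :=
        hKconv hxbar hx hlam0 (by linarith) (by ring)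
      have h1 := hsq x hx xbar hxbar lam ⟨hlam0, hlam1⟩
      have h2 := ih _ hz
      have hzx : (lam • xbar + (1 - lam) • x) - xbar = (1 - lam) • (x - xbar) := by
        module
      have hnorm : ‖(lam • xbar + (1 - lam) • x) - xbar‖ ^ 2
          = (1 - lam) ^ 2 * ‖x - xbar‖ ^ 2 := by
        rw [hzx, norm_smul, Real.norm_eq_abs, abs_of_nonneg (by linarith : (0:ℝ) ≤ 1 - lam)]
        ring
      rw [hnorm] at h2
      have hmax : max (h xbar) (h x) = h x := max_eq_right (hmin x hx)
      rw [hmax] at h1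
      -- combine
      have hd2 : 0 ≤ ‖x - xbar‖ ^ 2 := by positivity
      have hcoef : (γ / 4) * (((k : ℝ) + 1) / ((k : ℝ) + 1 + 1))
          = (γ / 4) * ((k : ℝ) / (k + 1)) * (1 - lam) ^ 2 + lam * (1 - lam) * (γ / 2) := by
        have hk1 : ((k : ℝ) + 1) ≠ 0 := by positivity
        have hk2' : ((k : ℝ) + 2) ≠ 0 := ne_of_gt hk2
        rw [hlamdef]
        field_simp
        ring
      have : h xbar + ((γ / 4) * ((k : ℝ) / (k + 1)) * (1 - lam) ^ 2
          + lam * (1 - lam) * (γ / 2)) * ‖x - xbar‖ ^ 2 ≤ h x := by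
        nlinarith [h1, h2]
      push_cast
      calc h xbar + (γ / 4) * (((k : ℝ) + 1) / ((k : ℝ) + 1 + 1)) * ‖x - xbar‖ ^ 2
          = h xbar + ((γ / 4) * ((k : ℝ) / (k + 1)) * (1 - lam) ^ 2
            + lam * (1 - lam) * (γ / 2)) * ‖x - xbar‖ ^ 2 := by rw [hcoef]
        _ ≤ h x := this
  intro x hx
  have hlim : Filter.Tendsto
      (fun k : ℕ => h xbar + (γ / 4) * ((k : ℝ) / (k + 1)) * ‖x - xbar‖ ^ 2)
      Filter.atTop (nhds (h xbar + (γ / 4) * 1 * ‖x - xbar‖ ^ 2)) := by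
    have h1 : Filter.Tendsto (fun k : ℕ => (k : ℝ) / (k + 1)) Filter.atTop (nhds 1) :=
      tendsto_natCast_div_add_atTop (1 : ℝ)
    exact Filter.Tendsto.const_add _ ((((h1.const_mul (γ / 4))).mul_const _))
  have := le_of_tendsto hlim (Filter.Eventually.of_forall fun k => key k x hx)
  linarith
end

section
/- Let K ⊆ ℝⁿ be an open convex set and h : K → ℝ be differentiable and strongly quasiconvex with modulus γ > 0. Then for every x, y ∈ K with h(x) ≤ h(y), one has ⟨∇h(y), x - y⟩ ≤ -(γ/2)‖y - x‖². -/
/-! Along the segment from `y` towards `x`, strong quasiconvexity with `h x ≤ h y` gives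
`h (y + t • (x - y)) ≤ h y - t (1 - t) (γ/2) ‖y - x‖²`; dividing by `t` and letting `t → 0⁺`
turns the left side into the directional derivative `⟪∇h(y), x - y⟫`. -/

open Set Filter Topology AffineMap

theorem le_neg_of_hasDerivWithinAt_of_le_sub_mul_one_sub {φ : ℝ → ℝ} {c m : ℝ}
    (hφ : HasDerivWithinAt φ c (Ioi 0) 0)
    (hle : ∀ t ∈ Ioc (0 : ℝ) 1, φ t ≤ φ 0 - t * (1 - t) * m) : c ≤ -m := by
  have hslope : Tendsto (slope φ 0) (𝓝[>] 0) (𝓝 c) :=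
    (hasDerivWithinAt_iff_tendsto_slope' (lt_irrefl 0)).mp hφ
  have hbound : Tendsto (fun t : ℝ => -((1 - t) * m)) (𝓝[>] 0) (𝓝 (-m)) := by
    have : Continuous fun t : ℝ => -((1 - t) * m) := by fun_prop
    simpa using (this.tendsto 0).mono_left nhdsWithin_le_nhds
  refine le_of_tendsto_of_tendsto hslope hbound ?_
  filter_upwards [Ioc_mem_nhdsGT (zero_lt_one' ℝ)] with t ht
  rw [slope_def_field, sub_zero, div_le_iff₀ ht.1]
  linarith [hle t ht]

theorem HasGradientAt.hasDerivAt_comp_lineMap {E : Type*} [NormedAddCommGroup E]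
    [InnerProductSpace ℝ E] [CompleteSpace E] {f : E → ℝ} {g x y : E}
    (hf : HasGradientAt f g x) :
    HasDerivAt (fun t : ℝ => f (lineMap x y t)) (inner ℝ g (y - x)) 0 := by
  rw [← lineMap_apply_zero x y (k := ℝ)] at hf
  exact hf.hasFDerivAt.comp_hasDerivAt (0 : ℝ) hasDerivAt_lineMap

theorem first_order_characterization_strongly_quasiconvex_general
    {n : ℕ} (K : Set (EuclideanSpace ℝ (Fin n)))
    (h : EuclideanSpace ℝ (Fin n) → ℝ) (g : EuclideanSpace ℝ (Fin n) → EuclideanSpace ℝ (Fin n))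
    (hgrad : ∀ x ∈ K, HasGradientAt h (g x) x)
    (γ : ℝ)
    (hsq : ∀ x ∈ K, ∀ y ∈ K, ∀ lam : ℝ, lam ∈ Set.Icc (0:ℝ) 1 →
      h (lam • y + (1 - lam) • x) ≤
        max (h y) (h x) - lam * (1 - lam) * (γ / 2) * ‖x - y‖ ^ 2) :
    ∀ x ∈ K, ∀ y ∈ K, h x ≤ h y →
      (inner ℝ (g y) (x - y) : ℝ) ≤ -(γ / 2) * ‖y - x‖ ^ 2 := by
  intro x hx y hy hxy
  rw [neg_mul]
  refine le_neg_of_hasDerivWithinAt_of_le_sub_mul_one_sub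
    ((hgrad y hy).hasDerivAt_comp_lineMap (y := x)).hasDerivWithinAt fun t ht => ?_
  have hdescent := hsq y hy x hx t (Ioc_subset_Icc_self ht)
  rw [max_eq_right hxy, add_comm, ← lineMap_apply_module] at hdescent
  simpa only [lineMap_apply_zero, mul_assoc] using hdescent

theorem first_order_characterization_strongly_quasiconvex
    {n : ℕ} (K : Set (EuclideanSpace ℝ (Fin n))) (hKo : IsOpen K) (hKconv : Convex ℝ K)
    (h : EuclideanSpace ℝ (Fin n) → ℝ) (g : EuclideanSpace ℝ (Fin n) → EuclideanSpace ℝ (Fin n))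
    (hgrad : ∀ x ∈ K, HasGradientAt h (g x) x)
    (γ : ℝ) (hγ : 0 < γ)
    (hsq : ∀ x ∈ K, ∀ y ∈ K, ∀ lam : ℝ, lam ∈ Set.Icc (0:ℝ) 1 →
      h (lam • y + (1 - lam) • x) ≤
        max (h y) (h x) - lam * (1 - lam) * (γ / 2) * ‖x - y‖ ^ 2) :
    ∀ x ∈ K, ∀ y ∈ K, h x ≤ h y →
      (inner ℝ (g y) (x - y) : ℝ) ≤ -(γ / 2) * ‖y - x‖ ^ 2 :=
  first_order_characterization_strongly_quasiconvex_general K h g hgrad γ hsq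
end

section
/- Let h : ℝⁿ → ℝ be differentiable with L-Lipschitz continuous gradient (L > 0) and strongly quasiconvex with modulus γ > 0, with global minimizer x̄. Then h satisfies the Polyak–Łojasiewicz inequality ‖∇h(x)‖² ≥ (γ²/(2L))(h(x) - h(x̄)) for all x ∈ ℝⁿ. -/
/-!
At the minimizer the gradient vanishes, so the descent lemma gives
`h x - h x̄ ≤ (L/2)‖x - x̄‖²`. On the other hand `h x̄ ≤ h x`, so strong quasiconvexity along the
segment from `x` to `x̄` forces `⟪∇h x, x̄ - x⟫ ≤ -(γ/2)‖x - x̄‖²`, and Cauchy–Schwarz turns this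
into `(γ/2)‖x - x̄‖ ≤ ‖∇h x‖`. Eliminating `‖x - x̄‖` between the two bounds gives the inequality.
-/

open InnerProductSpace RealInnerProductSpace

variable {E : Type*} [NormedAddCommGroup E]

def StronglyQuasiconvex [NormedSpace ℝ E] (γ : ℝ) (h : E → ℝ) : Prop :=
  ∀ x y : E, ∀ lam : ℝ, lam ∈ Set.Icc (0:ℝ) 1 →
    h (lam • y + (1 - lam) • x) ≤ max (h y) (h x) - lam * (1 - lam) * (γ / 2) * ‖x - y‖ ^ 2

variable [InnerProductSpace ℝ E] [CompleteSpace E] {h : E → ℝ}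

theorem HasGradientAt.hasDerivAt_comp_add_smul {g a d : E} {t : ℝ}
    (hg : HasGradientAt h g (a + t • d)) :
    HasDerivAt (fun s : ℝ => h (a + s • d)) ⟪g, d⟫ t := by
  have hline : HasDerivAt (fun s : ℝ => a + s • d) d t :=
    ((hasDerivAt_id t).smul_const d).const_add a |>.congr_deriv (one_smul ℝ d)
  simpa [toDual_apply_apply, Function.comp_def] using hg.hasFDerivAt.comp_hasDerivAt t hline

theorem IsLocalMin.hasGradientAt_eq_zero {g a : E} (hmin : IsLocalMin h a)
    (hg : HasGradientAt h g a) : g = 0 :=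
  (toDual ℝ E).map_eq_zero_iff.mp (hmin.hasFDerivAt_eq_zero hg.hasFDerivAt)

theorem descent_lemma {g : E → E} {L : ℝ} (hgrad : ∀ x, HasGradientAt h (g x) x)
    (hLip : ∀ x y, ‖g x - g y‖ ≤ L * ‖x - y‖) (x y : E) :
    h y ≤ h x + ⟪g x, y - x⟫ + L / 2 * ‖y - x‖ ^ 2 := by
  set d := y - x
  let φ : ℝ → ℝ := fun t => h (x + t • d) - t * ⟪g x, d⟫ - L / 2 * t ^ 2 * ‖d‖ ^ 2
  have hφ : ∀ t, HasDerivAt φ (⟪g (x + t • d), d⟫ - ⟪g x, d⟫ - L * t * ‖d‖ ^ 2) t := by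
    intro t
    refine ((((hgrad (x + t • d)).hasDerivAt_comp_add_smul).sub
      ((hasDerivAt_id t).mul_const ⟪g x, d⟫)).sub
      (((hasDerivAt_pow 2 t).const_mul (L / 2)).mul_const (‖d‖ ^ 2))).congr_deriv ?_
    push_cast; ring
  have hanti : AntitoneOn φ (Set.Ici 0) := by
    refine antitoneOn_of_hasDerivWithinAt_nonpos (convex_Ici 0)
      (fun t _ => (hφ t).continuousAt.continuousWithinAt)
      (fun t _ => (hφ t).hasDerivWithinAt) fun t ht => ?_
    rw [interior_Ici] at ht
    have hlip : ‖g (x + t • d) - g x‖ ≤ L * (t * ‖d‖) := by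
      simpa [norm_smul, abs_of_pos (show 0 < t from ht)] using hLip (x + t • d) x
    calc ⟪g (x + t • d), d⟫ - ⟪g x, d⟫ - L * t * ‖d‖ ^ 2
        = ⟪g (x + t • d) - g x, d⟫ - L * t * ‖d‖ ^ 2 := by rw [inner_sub_left]
      _ ≤ ‖g (x + t • d) - g x‖ * ‖d‖ - L * t * ‖d‖ ^ 2 := by
        gcongr; exact real_inner_le_norm _ _
      _ ≤ 0 := by nlinarith [norm_nonneg d]
  have hφ01 : φ 1 ≤ φ 0 := hanti (Set.mem_Ici.mpr le_rfl) (Set.mem_Ici.mpr zero_le_one) zero_le_one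
  have hφ1 : φ 1 = h y - ⟪g x, y - x⟫ - L / 2 * ‖y - x‖ ^ 2 := by simp [φ, d]
  have hφ0 : φ 0 = h x := by simp [φ]
  linarith

theorem StronglyQuasiconvex.inner_gradient_le {γ : ℝ} {g x y : E} (hq : StronglyQuasiconvex γ h)
    (hg : HasGradientAt h g x) (hyx : h y ≤ h x) :
    ⟪g, y - x⟫ ≤ -(γ / 2 * ‖x - y‖ ^ 2) := by
  -- `ψ` is maximal on `[0, 1]` at `0`, so its right derivative there is nonpositive.
  let ψ : ℝ → ℝ := fun t => h (x + t • (y - x)) + t * (1 - t) * (γ / 2 * ‖x - y‖ ^ 2)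
  have hψ : HasDerivAt ψ (⟪g, y - x⟫ + γ / 2 * ‖x - y‖ ^ 2) 0 := by
    have hg₀ : HasGradientAt h g (x + (0:ℝ) • (y - x)) := by simpa using hg
    refine (hg₀.hasDerivAt_comp_add_smul.add (((hasDerivAt_id (0:ℝ)).mul
      ((hasDerivAt_const (0:ℝ) (1:ℝ)).sub (hasDerivAt_id 0))).mul_const
      (γ / 2 * ‖x - y‖ ^ 2))).congr_deriv ?_
    simp
  have hmax : IsMaxOn ψ (Set.Icc 0 1) 0 := by
    intro t ht
    have hqt := hq x y t ht
    rw [max_eq_right hyx] at hqt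
    show ψ t ≤ ψ 0
    simp only [ψ, zero_smul, add_zero, zero_mul]
    have hpt : x + t • (y - x) = t • y + (1 - t) • x := by module
    rw [hpt]; linarith
  have hψ' := hmax.localize.hasFDerivWithinAt_nonpos hψ.hasFDerivAt.hasFDerivWithinAt
    (y := 1) (mem_posTangentConeAt_of_segment_subset (by simp [segment_eq_Icc]))
  simp only [ContinuousLinearMap.toSpanSingleton_apply, smul_eq_mul, one_mul] at hψ'
  linarith

theorem StronglyQuasiconvex.mul_norm_sub_le_norm_gradient {γ : ℝ} {g x y : E}
    (hq : StronglyQuasiconvex γ h) (hg : HasGradientAt h g x) (hyx : h y ≤ h x) :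
    γ / 2 * ‖x - y‖ ≤ ‖g‖ := by
  rcases (norm_nonneg (x - y)).eq_or_lt with hxy | hxy
  · rw [← hxy, mul_zero]
    exact norm_nonneg g
  have hinner : ⟪g, y - x⟫ = -⟪g, x - y⟫ := by rw [← inner_neg_right, neg_sub]
  refine le_of_mul_le_mul_right ?_ hxy
  calc γ / 2 * ‖x - y‖ * ‖x - y‖ = γ / 2 * ‖x - y‖ ^ 2 := by ring
    _ ≤ ⟪g, x - y⟫ := by linarith [hq.inner_gradient_le hg hyx, hinner]
    _ ≤ ‖g‖ * ‖x - y‖ := real_inner_le_norm g (x - y)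

theorem PL_inequality_of_strongly_quasiconvex
    {n : ℕ} (h : EuclideanSpace ℝ (Fin n) → ℝ)
    (g : EuclideanSpace ℝ (Fin n) → EuclideanSpace ℝ (Fin n))
    (hgrad : ∀ x, HasGradientAt h (g x) x)
    (L : ℝ) (hL : 0 < L) (hLip : ∀ x y, ‖g x - g y‖ ≤ L * ‖x - y‖)
    (γ : ℝ) (hγ : 0 < γ)
    (hsq : ∀ x y : EuclideanSpace ℝ (Fin n), ∀ lam : ℝ, lam ∈ Set.Icc (0:ℝ) 1 →
      h (lam • y + (1 - lam) • x) ≤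
        max (h y) (h x) - lam * (1 - lam) * (γ / 2) * ‖x - y‖ ^ 2)
    (xbar : EuclideanSpace ℝ (Fin n)) (hmin : ∀ x, h xbar ≤ h x) :
    ∀ x, γ ^ 2 / (2 * L) * (h x - h xbar) ≤ ‖g x‖ ^ 2 := by
  intro x
  have hg_xbar : g xbar = 0 := IsLocalMin.hasGradientAt_eq_zero (.of_forall hmin) (hgrad xbar)
  have hupper : h x - h xbar ≤ L / 2 * ‖x - xbar‖ ^ 2 := by
    linarith [show ⟪g xbar, x - xbar⟫ = 0 by simp [hg_xbar], descent_lemma hgrad hLip xbar x]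
  have hlower : γ / 2 * ‖x - xbar‖ ≤ ‖g x‖ :=
    StronglyQuasiconvex.mul_norm_sub_le_norm_gradient hsq (hgrad x) (hmin x)
  calc γ ^ 2 / (2 * L) * (h x - h xbar)
      ≤ γ ^ 2 / (2 * L) * (L / 2 * ‖x - xbar‖ ^ 2) := by gcongr
    _ = (γ / 2 * ‖x - xbar‖) ^ 2 := by field_simp
    _ ≤ ‖g x‖ ^ 2 := by gcongr
end

section
/- Let h : ℝⁿ → ℝ be differentiable strongly quasiconvex with modulus γ > 0 and unique minimizer x̄. Then ‖x - x̄‖ ≤ (2/γ)‖∇h(x)‖ for all x ∈ ℝⁿ (an error bound in terms of the gradient). -/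
/-!
On the segment from `x` to a minimizer `x̄`, strong quasiconvexity together with `h x̄ ≤ h x`
makes `h` drop below `h x` by at least `t (1 - t) (γ / 2) ‖x - x̄‖²`. Differentiating at `t = 0`
gives `⟪∇h x, x - x̄⟫ ≥ (γ / 2) ‖x - x̄‖²`, and Cauchy–Schwarz turns this into the error bound.
-/

open Set

section

variable {E : Type*} [NormedAddCommGroup E] [NormedSpace ℝ E]

def StronglyQuasiconvexWith (γ : ℝ) (h : E → ℝ) : Prop :=
  ∀ x y : E, ∀ lam : ℝ, lam ∈ Icc (0 : ℝ) 1 →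
    h (lam • y + (1 - lam) • x) ≤ max (h y) (h x) - lam * (1 - lam) * (γ / 2) * ‖x - y‖ ^ 2

/-- Adding `t (1 - t) c` makes `t = 0` a maximum on `[0, 1]`, so Fermat's theorem for
one-sided derivatives applies. -/
theorem HasFDerivAt.apply_le_neg_of_forall_segment_le {f : E → ℝ} {f' : E →L[ℝ] ℝ} {x : E}
    (hf : HasFDerivAt f f' x) (v : E) (c : ℝ)
    (hle : ∀ t ∈ Icc (0 : ℝ) 1, f (x + t • v) ≤ f x - t * (1 - t) * c) :
    f' v ≤ -c := by
  set ψ : ℝ → ℝ := fun t ↦ f (x + t • v) + t * (1 - t) * c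
  have hline : HasDerivAt (fun t : ℝ ↦ x + t • v) v 0 := by
    simpa using ((hasDerivAt_id (0 : ℝ)).smul_const v).const_add x
  have hquad : HasDerivAt (fun t : ℝ ↦ t * (1 - t) * c) c 0 := by
    simpa using (((hasDerivAt_id (0 : ℝ)).mul ((hasDerivAt_id 0).const_sub 1)).mul_const c)
  have hf0 : HasFDerivAt f f' (x + (0 : ℝ) • v) := by rwa [zero_smul, add_zero]
  have hψ : HasDerivAt ψ (f' v + c) 0 := (hf0.comp_hasDerivAt 0 hline).add hquad
  have hmax : IsMaxOn ψ (Icc 0 1) 0 := fun t ht ↦ by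
    show ψ t ≤ ψ 0
    simp only [ψ, zero_smul, add_zero, zero_mul]
    linarith [hle t ht]
  have hcone : (1 : ℝ) ∈ posTangentConeAt (Icc (0 : ℝ) 1) 0 :=
    mem_posTangentConeAt_of_segment_subset (by simp [segment_eq_Icc])
  have := hmax.localize.hasFDerivWithinAt_nonpos hψ.hasFDerivAt.hasFDerivWithinAt hcone
  rw [ContinuousLinearMap.toSpanSingleton_apply, one_smul] at this
  linarith

theorem StronglyQuasiconvexWith.mul_sq_norm_le_fderiv_sub {γ : ℝ} {h : E → ℝ}
    (hsq : StronglyQuasiconvexWith γ h) {xbar : E} (hmin : ∀ x, h xbar ≤ h x)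
    {x : E} {h' : E →L[ℝ] ℝ} (hx : HasFDerivAt h h' x) :
    γ / 2 * ‖x - xbar‖ ^ 2 ≤ h' (x - xbar) := by
  have hdescent : ∀ t ∈ Icc (0 : ℝ) 1,
      h (x + t • (xbar - x)) ≤ h x - t * (1 - t) * (γ / 2 * ‖x - xbar‖ ^ 2) := fun t ht ↦ by
    have hpt : x + t • (xbar - x) = t • xbar + (1 - t) • x := by
      rw [smul_sub, sub_smul, one_smul]; abel
    have := hsq x xbar t ht
    rw [max_eq_right (hmin x)] at this
    rw [hpt]; linarith
  have := hx.apply_le_neg_of_forall_segment_le _ _ hdescent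
  rw [← neg_sub, map_neg] at this
  linarith

end

theorem error_bound_of_strongly_quasiconvex
    {n : ℕ} (h : EuclideanSpace ℝ (Fin n) → ℝ)
    (g : EuclideanSpace ℝ (Fin n) → EuclideanSpace ℝ (Fin n))
    (hgrad : ∀ x, HasGradientAt h (g x) x)
    (γ : ℝ) (hγ : 0 < γ)
    (hsq : ∀ x y : EuclideanSpace ℝ (Fin n), ∀ lam : ℝ, lam ∈ Set.Icc (0:ℝ) 1 →
      h (lam • y + (1 - lam) • x) ≤
        max (h y) (h x) - lam * (1 - lam) * (γ / 2) * ‖x - y‖ ^ 2)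
    (xbar : EuclideanSpace ℝ (Fin n)) (hmin : ∀ x, h xbar ≤ h x) :
    ∀ x, ‖x - xbar‖ ≤ (2 / γ) * ‖g x‖ := by
  intro x
  have hfirst : γ / 2 * ‖x - xbar‖ ^ 2 ≤ inner ℝ (g x) (x - xbar) :=
    StronglyQuasiconvexWith.mul_sq_norm_le_fderiv_sub hsq hmin (hgrad x).hasFDerivAt
  have hcs : γ / 2 * ‖x - xbar‖ ^ 2 ≤ ‖g x‖ * ‖x - xbar‖ :=
    hfirst.trans (real_inner_le_norm _ _)
  rcases (norm_nonneg (x - xbar)).eq_or_lt with hzero | hpos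
  · rw [← hzero]; positivity
  have hlin : γ / 2 * ‖x - xbar‖ ≤ ‖g x‖ :=
    le_of_mul_le_mul_right (by linarith [hcs]) hpos
  rw [div_mul_eq_mul_div, le_div_iff₀ hγ]
  linarith
end

section
/- The function h : ℝ → ℝ given by h(x) = x² + 2sin²(x) is strongly quasiconvex on ℝ with modulus γ = 1/2, but h is not convex. -/
/-!
For `h t = t ^ 2 + 2 sin² t`, the function `h t - t ^ 2 / 2 = t ^ 2 / 2 + 2 sin² t` is
nondecreasing on `[0, ∞)`, its derivative `t + 2 sin (2t)` being nonnegative there. Since `h` is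
even, put `M = max |x| |y|` and `m = λ y + (1 - λ) x`; then `|m| ≤ M - λ (1 - λ) |x - y|`, so
`h m ≤ h M - (M² - m²) / 2`, and `M² - m² ≥ (M - |m|) M ≥ λ (1 - λ) |x - y|² / 2`
because `|x - y| ≤ 2M`. Convexity already fails at the midpoint of `π / 4` and `3π / 4`, where
it would force `π ≥ 4`.
-/

open Real Set

def StrongQuasiconvex (γ : ℝ) (f : ℝ → ℝ) : Prop :=
  ∀ x y lam : ℝ, lam ∈ Icc (0 : ℝ) 1 →
    f (lam * y + (1 - lam) * x) ≤ max (f y) (f x) - lam * (1 - lam) * (γ / 2) * |x - y| ^ 2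

lemma Function.Even.apply_abs {f : ℝ → ℝ} (hf : f.Even) (x : ℝ) : f |x| = f x := by
  rcases abs_choice x with h | h <;> simp [h, hf x]

lemma mul_one_sub_mul_abs_sub_le_sub_of_le {x y M lam : ℝ} (hx : x ≤ M) (hy : y ≤ M)
    (hlam : lam ∈ Icc (0 : ℝ) 1) :
    lam * (1 - lam) * |x - y| ≤ M - (lam * y + (1 - lam) * x) := by
  obtain ⟨h0, h1⟩ := hlam
  have hxy : |x - y| ≤ (M - x) + (M - y) := abs_le.2 ⟨by linarith, by linarith⟩
  calc lam * (1 - lam) * |x - y| ≤ lam * (1 - lam) * ((M - x) + (M - y)) := by gcongr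
    _ ≤ (1 - lam) * (M - x) + lam * (M - y) := by
        nlinarith [mul_nonneg (mul_nonneg h0 h0) (sub_nonneg.2 hx),
          mul_nonneg (mul_nonneg (sub_nonneg.2 h1) (sub_nonneg.2 h1)) (sub_nonneg.2 hy)]
    _ = M - (lam * y + (1 - lam) * x) := by ring

lemma mul_one_sub_mul_abs_sub_le_max_abs_sub_abs {x y lam : ℝ} (hlam : lam ∈ Icc (0 : ℝ) 1) :
    lam * (1 - lam) * |x - y| ≤ max |x| |y| - |lam * y + (1 - lam) * x| := by
  have hx : |x| ≤ max |x| |y| := le_max_left _ _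
  have hy : |y| ≤ max |x| |y| := le_max_right _ _
  have upper := mul_one_sub_mul_abs_sub_le_sub_of_le (le_of_abs_le hx) (le_of_abs_le hy) hlam
  have lower := mul_one_sub_mul_abs_sub_le_sub_of_le (x := -x) (y := -y)
    ((neg_le_abs x).trans hx) ((neg_le_abs y).trans hy) hlam
  rw [show -x - -y = -(x - y) by ring, abs_neg] at lower
  rcases abs_choice (lam * y + (1 - lam) * x) with h | h <;> rw [h] <;> linarith

theorem Function.Even.strongQuasiconvex {f : ℝ → ℝ} {c : ℝ} (hc : 0 ≤ c) (hf : f.Even)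
    (hmono : MonotoneOn (fun t => f t - c * t ^ 2) (Ici 0)) : StrongQuasiconvex c f := by
  intro x y lam hlam
  set M := max |x| |y|
  set a := |lam * y + (1 - lam) * x|
  have hgap := mul_one_sub_mul_abs_sub_le_max_abs_sub_abs (x := x) (y := y) hlam
  have hdiam : |x - y| ≤ 2 * M := by
    have := abs_sub x y
    linarith [le_max_left |x| |y|, le_max_right |x| |y|]
  have ha : 0 ≤ a := abs_nonneg _
  have haM : a ≤ M := by
    have := mul_nonneg (mul_nonneg hlam.1 (sub_nonneg.2 hlam.2)) (abs_nonneg (x - y))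
    linarith
  have hfM : f M ≤ max (f y) (f x) := by
    obtain h | h : M = |x| ∨ M = |y| := max_choice _ _ <;> rw [h, hf.apply_abs]
    exacts [le_max_right _ _, le_max_left _ _]
  have hfa : f a - c * a ^ 2 ≤ f M - c * M ^ 2 := hmono ha (ha.trans haM) haM
  have hdrop : lam * (1 - lam) * (c / 2) * |x - y| ^ 2 ≤ c * (M ^ 2 - a ^ 2) := by
    calc lam * (1 - lam) * (c / 2) * |x - y| ^ 2
        = c / 2 * (lam * (1 - lam) * |x - y| * |x - y|) := by ring
      _ ≤ c / 2 * ((M - a) * (2 * M)) := by gcongr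
      _ ≤ c * (M ^ 2 - a ^ 2) := by nlinarith [mul_nonneg hc (mul_nonneg (sub_nonneg.2 haM) ha)]
  rw [← hf.apply_abs]
  linarith

lemma add_two_mul_sin_two_mul_nonneg {t : ℝ} (ht : 0 ≤ t) : 0 ≤ t + 2 * sin (2 * t) := by
  rcases le_or_gt t (π / 2) with h | h
  · have := sin_nonneg_of_nonneg_of_le_pi (by linarith) (by linarith : 2 * t ≤ π)
    linarith
  rcases le_or_gt 2 t with h' | h'
  · linarith [neg_one_le_sin (2 * t)]
  -- on `(π/2, 2)` compare `sin (2t) = -sin (2t - π)` with `-(2t - π)`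
  have hsin : sin (2 * t - π) ≤ 2 * t - π := sin_le (by linarith)
  rw [sin_sub_pi] at hsin
  linarith [pi_gt_three]

lemma monotoneOn_sq_div_two_add_two_mul_sin_sq :
    MonotoneOn (fun t : ℝ => t ^ 2 / 2 + 2 * sin t ^ 2) (Ici 0) := by
  refine monotoneOn_of_hasDerivWithinAt_nonneg (f' := fun t => t + 2 * sin (2 * t))
    (convex_Ici 0) (by fun_prop) (fun t _ => ?_) (fun t ht => ?_)
  · have h := ((hasDerivAt_pow 2 t).div_const 2).add (((hasDerivAt_sin t).pow 2).const_mul 2)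
    refine (h.congr_deriv ?_).hasDerivWithinAt
    rw [sin_two_mul]
    push_cast
    ring
  · rw [interior_Ici] at ht
    exact add_two_mul_sin_two_mul_nonneg (le_of_lt ht)

lemma not_convexOn_sq_add_two_mul_sin_sq :
    ¬ ConvexOn ℝ univ (fun z : ℝ => z ^ 2 + 2 * sin z ^ 2) := by
  intro hconv
  have hmid := hconv.2 (mem_univ (π / 4)) (mem_univ (3 * π / 4))
    (by norm_num : (0 : ℝ) ≤ 1 / 2) (by norm_num : (0 : ℝ) ≤ 1 / 2) (by norm_num)
  have hsin : sin (3 * π / 4) = sin (π / 4) := by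
    rw [show 3 * π / 4 = π - π / 4 by ring, sin_pi_sub]
  have hsq : sin (π / 4) ^ 2 = 1 / 2 := by
    rw [sin_pi_div_four, div_pow, sq_sqrt zero_le_two]; norm_num
  simp only [smul_eq_mul, hsin, hsq,
    show 1 / 2 * (π / 4) + 1 / 2 * (3 * π / 4) = π / 2 by ring, sin_pi_div_two] at hmid
  nlinarith [pi_lt_four, pi_pos]

theorem example_strongly_quasiconvex_not_convex :
    (∀ x y : ℝ, ∀ lam : ℝ, lam ∈ Set.Icc (0:ℝ) 1 →
      (fun z => z ^ 2 + 2 * Real.sin z ^ 2) (lam * y + (1 - lam) * x) ≤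
        max ((fun z => z ^ 2 + 2 * Real.sin z ^ 2) y)
            ((fun z => z ^ 2 + 2 * Real.sin z ^ 2) x)
          - lam * (1 - lam) * ((1 / 2 : ℝ) / 2) * |x - y| ^ 2) ∧
    ¬ ConvexOn ℝ Set.univ (fun z : ℝ => z ^ 2 + 2 * Real.sin z ^ 2) := by
  have hquasi : StrongQuasiconvex (1 / 2) fun z : ℝ => z ^ 2 + 2 * sin z ^ 2 := by
    refine Function.Even.strongQuasiconvex (by norm_num)
      (fun z => by simp only [neg_sq, sin_neg]) ?_
    convert monotoneOn_sq_div_two_add_two_mul_sin_sq using 2 with t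
    ring
  exact ⟨hquasi, not_convexOn_sq_add_two_mul_sin_sq⟩
end
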